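/- arXiv:2007.14929 — 4 statements merged into one kernel-verified Lean document; each statement's English description precedes it below -/
import Mathlib

section
/- Let G be a group and F : G → ℝ an antisymmetric quasimorphism with defect at most D, i.e. F(g⁻¹) = −F(g) for all g ∈ G and |F(gh) − F(g) − F(h)| ≤ D for all g, h ∈ G. If an element g ∈ G can be written as a product of C commutators, g = [a₁,b₁][a₂,b₂]⋯[a_C,b_C], then |F(g)| ≤ 4C·D. -/
/-!
Writing `⁅x, y⁆ = (x * y) * (x⁻¹ * y⁻¹)` and using `F (x⁻¹ * y⁻¹) ≈ -F x - F y ≈ -F (x * y)`,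
each commutator costs at most `3 D`; multiplying `C` of them together costs one more defect per
factor, for a total of at most `C (3 D + D)`.
-/

open scoped commutatorElement

section Quasimorphism

variable {G : Type*} [Group G] {F : G → ℝ} {D : ℝ}

theorem map_one_eq_zero_of_map_inv (hanti : ∀ g : G, F g⁻¹ = -F g) : F 1 = 0 := by
  have h := hanti 1
  rw [inv_one] at h
  linarith

theorem abs_map_mul_le (hquasi : ∀ g h : G, |F (g * h) - F g - F h| ≤ D) (g h : G) :
    |F (g * h)| ≤ |F g| + |F h| + D := by
  calc |F (g * h)| = |(F (g * h) - F g - F h) + F g + F h| := by ring_nf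
    _ ≤ |F (g * h) - F g - F h| + |F g| + |F h| := abs_add_three _ _ _
    _ ≤ |F g| + |F h| + D := by linarith [hquasi g h]

theorem abs_map_commutatorElement_le (hanti : ∀ g : G, F g⁻¹ = -F g)
    (hquasi : ∀ g h : G, |F (g * h) - F g - F h| ≤ D) (x y : G) :
    |F ⁅x, y⁆| ≤ 3 * D := by
  have hsplit : ⁅x, y⁆ = (x * y) * (x⁻¹ * y⁻¹) := by group
  have h₁ := hquasi (x * y) (x⁻¹ * y⁻¹)
  have h₂ := hquasi x y
  have h₃ := hquasi x⁻¹ y⁻¹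
  rw [hanti, hanti] at h₃
  rw [hsplit]
  rw [abs_le] at h₁ h₂ h₃ ⊢
  constructor <;> linarith

theorem abs_map_list_prod_le (hF1 : F 1 = 0)
    (hquasi : ∀ g h : G, |F (g * h) - F g - F h| ≤ D) {B : ℝ} :
    ∀ l : List G, (∀ x ∈ l, |F x| ≤ B) → |F l.prod| ≤ l.length * (B + D)
  | [], _ => by simp [hF1]
  | x :: l, hl => by
    have hx : |F x| ≤ B := hl x List.mem_cons_self
    have ih := abs_map_list_prod_le hF1 hquasi l fun y hy => hl y (List.mem_cons_of_mem x hy)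
    calc |F (x :: l).prod| ≤ |F x| + |F l.prod| + D := abs_map_mul_le hquasi x l.prod
      _ ≤ B + l.length * (B + D) + D := by linarith
      _ = (x :: l).length * (B + D) := by push_cast [List.length_cons]; ring

end Quasimorphism

/-- If `g` is a product of `C` commutators, then an antisymmetric quasimorphism with
defect at most `D` satisfies `|F g| ≤ 4 * C * D`. -/
theorem antisymmetric_quasimorphism_bound_on_product_of_commutators
    {G : Type*} [Group G] (F : G → ℝ) (D : ℝ)
    (hanti : ∀ g : G, F g⁻¹ = -F g)
    (hquasi : ∀ g h : G, |F (g * h) - F g - F h| ≤ D)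
    (C : ℕ) (g : G) (a b : ℕ → G)
    (hg : g = ((List.range C).map (fun i => ⁅a i, b i⁆)).prod) :
    |F g| ≤ 4 * C * D := by
  have hcomm : ∀ x ∈ (List.range C).map (fun i => ⁅a i, b i⁆), |F x| ≤ 3 * D := by
    simp only [List.mem_map]
    rintro _ ⟨i, -, rfl⟩
    exact abs_map_commutatorElement_le hanti hquasi (a i) (b i)
  have hbound := abs_map_list_prod_le (map_one_eq_zero_of_map_inv hanti) hquasi _ hcomm
  rw [List.length_map, List.length_range] at hbound
  rw [hg]
  linarith
end

section
/- Let n be a nonzero integer and consider the 2×2 real matrices A = [[1, −n],[0, 1]] and B = [[1, 0],[n, 1]] (both of determinant 1). Then the matrix A²B²A⁻²B⁻² has trace of absolute value strictly greater than 2. -/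
open Matrix

/-- For a nonzero integer `n`, the commutator of squares
`A² B² A⁻² B⁻²` of `A = [[1,-n],[0,1]]` and `B = [[1,0],[n,1]]` has trace of
absolute value strictly greater than `2`. -/
theorem thurston_commutator_trace_gt_two (n : ℤ) (hn : n ≠ 0) :
    let A : Matrix (Fin 2) (Fin 2) ℝ := !![1, -(n : ℝ); 0, 1]
    let B : Matrix (Fin 2) (Fin 2) ℝ := !![1, 0; (n : ℝ), 1]
    |Matrix.trace (A ^ 2 * B ^ 2 * (A⁻¹) ^ 2 * (B⁻¹) ^ 2)| > 2 := by
  intro A B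
  have hA : A⁻¹ = !![1, (n : ℝ); 0, 1] := by
    apply Matrix.inv_eq_right_inv
    show (!![1, -(n : ℝ); 0, 1] : Matrix (Fin 2) (Fin 2) ℝ) * _ = 1
    rw [Matrix.mul_fin_two, Matrix.one_fin_two]
    norm_num
  have hB : B⁻¹ = !![1, 0; -(n : ℝ), 1] := by
    apply Matrix.inv_eq_right_inv
    show (!![1, 0; (n : ℝ), 1] : Matrix (Fin 2) (Fin 2) ℝ) * _ = 1
    rw [Matrix.mul_fin_two, Matrix.one_fin_two]
    norm_num
  have key : Matrix.trace (A ^ 2 * B ^ 2 * (A⁻¹) ^ 2 * (B⁻¹) ^ 2)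
      = 16 * (n : ℝ) ^ 4 + 2 := by
    rw [hA, hB]
    show Matrix.trace ((!![1, -(n : ℝ); 0, 1]) ^ 2 * (!![1, 0; (n : ℝ), 1]) ^ 2 *
      (!![1, (n : ℝ); 0, 1]) ^ 2 * (!![1, 0; -(n : ℝ), 1]) ^ 2) = _
    simp only [pow_two, Matrix.mul_fin_two, Matrix.trace_fin_two_of]
    ring
  rw [key]
  have h1 : (1 : ℝ) ≤ (n : ℝ) ^ 4 := by
    have h0 : (1 : ℤ) ≤ n ^ 2 := by rcases lt_or_gt_of_ne hn with h|h <;> nlinarith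
    have : (1 : ℤ) ≤ n ^ 4 := by nlinarith
    exact_mod_cast this
  rw [abs_of_pos (by nlinarith)]
  nlinarith
end

section
/- Let A and B be abelian groups and φ : A → B an additive group homomorphism whose kernel is countable. If A contains a subgroup isomorphic to ⊕_{ℝ} ℚ (the direct sum of continuum many copies of ℚ), then B also contains a subgroup isomorphic to ⊕_{ℝ} ℚ; equivalently, there is an injective additive group homomorphism from the group of finitely supported functions ℝ → ℚ into B. -/
/-- If an abelian group `A` contains a copy of `⊕_ℝ ℚ` and `φ : A → B` has countable
kernel, then `B` also contains a copy of `⊕_ℝ ℚ`. -/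
theorem rat_directsum_survives_countable_kernel
    {A B : Type*} [AddCommGroup A] [AddCommGroup B]
    (φ : A →+ B) (hker : (φ.ker : Set A).Countable)
    (h : ∃ i : (ℝ →₀ ℚ) →+ A, Function.Injective i) :
    ∃ j : (ℝ →₀ ℚ) →+ B, Function.Injective j := by
  obtain ⟨i, hi⟩ := h
  set M := ℝ →₀ ℚ
  set f : M →+ B := φ.comp i with hf
  -- kernel of f is countable
  have hKc : ((f.ker : Set M)).Countable := by
    have : (f.ker : Set M) = i ⁻¹' (φ.ker : Set A) := by
      ext x; simp [AddMonoidHom.mem_ker, hf]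
    rw [this]
    exact hker.preimage hi
  set W : Submodule ℚ M := Submodule.span ℚ (f.ker : Set M) with hW
  have hWrank : Module.rank ℚ W ≤ Cardinal.aleph0 := by
    refine (rank_span_le _).trans ?_
    haveI := hKc.to_subtype
    exact Cardinal.mk_le_aleph0
  obtain ⟨V, hV⟩ := W.exists_isCompl
  have hrankM : Module.rank ℚ M = Cardinal.continuum := by
    show Module.rank ℚ (ℝ →₀ ℚ) = _
    rw [rank_finsupp_self', Cardinal.mk_real]
  have hsum : Module.rank ℚ V + Module.rank ℚ W = Cardinal.continuum := by
    have := Submodule.rank_sup_add_rank_inf_eq V W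
    rw [hV.symm.sup_eq_top, hV.symm.inf_eq_bot] at this
    rw [rank_top, rank_bot, add_zero] at this
    rw [← this, hrankM]
  have hVrank : Module.rank ℚ V = Cardinal.continuum := by
    by_contra hne
    have hlt : Module.rank ℚ V < Cardinal.continuum := by
      refine lt_of_le_of_ne ?_ hne
      calc Module.rank ℚ V ≤ Module.rank ℚ V + Module.rank ℚ W := le_self_add
        _ = Cardinal.continuum := hsum
    have : Module.rank ℚ V + Module.rank ℚ W < Cardinal.continuum :=
      Cardinal.add_lt_of_lt Cardinal.aleph0_le_continuum hlt
        (lt_of_le_of_lt hWrank Cardinal.aleph0_lt_continuum)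
    exact absurd hsum this.ne
  obtain ⟨e⟩ := nonempty_linearEquiv_of_rank_eq (hrankM.trans hVrank.symm)
  refine ⟨f.comp (V.subtype.comp e.toLinearMap).toAddMonoidHom, ?_⟩
  rw [injective_iff_map_eq_zero]
  intro x hx
  have hmem : ((e x : M)) ∈ V ⊓ W := by
    constructor
    · exact (e x).2
    · exact Submodule.subset_span (by simpa [AddMonoidHom.mem_ker] using hx)
  rw [hV.symm.inf_eq_bot, Submodule.mem_bot] at hmem
  have : e x = 0 := Subtype.ext hmem
  simpa using e.injective (by simpa using this)
end

section
/- Let G be a group, k and N natural numbers, and H₁, …, H_k subgroups of G that pairwise commute elementwise (for i ≠ j, every element of H_i commutes with every element of H_j). Suppose for each i the element f_i ∈ G can be written as a product of N commutators of elements of H_i, say f_i = [g_{i,1}, g_{i,2}]⋯[g_{i,2N−1}, g_{i,2N}] with all g_{i,j} ∈ H_i. Then the product f = f₁f₂⋯f_k can be written as a product of N commutators in G; explicitly, f = ∏_{j=1}^{2N−1, j odd} [∏_{i=1}^{k} g_{i,j}, ∏_{i=1}^{k} g_{i,j+1}]. -/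
/-!
If `c, d` commute with `a, b`, then `⁅a * c, b * d⁆ = ⁅a, b⁆ * ⁅c, d⁆`, and `⁅c, d⁆` commutes
with `⁅a, b⁆`. So when the subgroups are added one at a time, each commutator of column
products splits off the commutator of the new row, and these new factors move to the end.
-/

open scoped commutatorElement

theorem Commute.commutatorElement_right {G : Type*} [Group G] {x c d : G}
    (hc : Commute x c) (hd : Commute x d) : Commute x ⁅c, d⁆ := by
  rw [commutatorElement_def]
  exact ((hc.mul_right hd).mul_right hc.inv_right).mul_right hd.inv_right

theorem commutatorElement_mul_mul_of_commute {G : Type*} [Group G] {a b c d : G}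
    (hca : Commute c a) (hcb : Commute c b) (hda : Commute d a) (hdb : Commute d b) :
    ⁅a * c, b * d⁆ = ⁅a, b⁆ * ⁅c, d⁆ := by
  have hab : Commute ⁅c, d⁆ (a⁻¹ * b⁻¹) :=
    ((hca.symm.commutatorElement_right hda.symm).symm.inv_right).mul_right
      ((hcb.symm.commutatorElement_right hdb.symm).symm.inv_right)
  calc ⁅a * c, b * d⁆ = a * b * ⁅c, d⁆ * (a⁻¹ * b⁻¹) := by
        simp only [commutatorElement_def, mul_inv_rev, mul_assoc, hcb.left_comm,
          hda.inv_inv.symm.left_comm]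
    _ = ⁅a, b⁆ * ⁅c, d⁆ := by
        rw [mul_assoc, hab.eq]
        simp only [commutatorElement_def a b, mul_assoc]

theorem List.prod_map_mul_of_commute {ι M : Type*} [Monoid M] {l : List ι} {f g : ι → M}
    (h : ∀ i ∈ l, ∀ j ∈ l, Commute (g i) (f j)) :
    (l.map fun i => f i * g i).prod = (l.map f).prod * (l.map g).prod := by
  induction l with
  | nil => simp
  | cons i l ih =>
    have hi : Commute (g i) (l.map f).prod :=
      Commute.list_prod_right _ _ fun x hx => by
        obtain ⟨j, hj, rfl⟩ := List.mem_map.mp hx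
        exact h i mem_cons_self j (mem_cons_of_mem _ hj)
    simp only [map_cons, prod_cons,
      ih fun i hi j hj => h i (mem_cons_of_mem _ hi) j (mem_cons_of_mem _ hj)]
    rw [mul_assoc, ← mul_assoc (g i), hi.eq]
    simp only [mul_assoc]

theorem List.prod_map_commutatorElement_mul_mul {ι G : Type*} [Group G] {l : List ι}
    {a b c d : ι → G}
    (hca : ∀ s ∈ l, ∀ t ∈ l, Commute (c s) (a t)) (hcb : ∀ s ∈ l, ∀ t ∈ l, Commute (c s) (b t))
    (hda : ∀ s ∈ l, ∀ t ∈ l, Commute (d s) (a t)) (hdb : ∀ s ∈ l, ∀ t ∈ l, Commute (d s) (b t)) :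
    (l.map fun t => ⁅a t * c t, b t * d t⁆).prod =
      (l.map fun t => ⁅a t, b t⁆).prod * (l.map fun t => ⁅c t, d t⁆).prod := by
  have hcomm : ∀ s ∈ l, ∀ t ∈ l, Commute ⁅c s, d s⁆ ⁅a t, b t⁆ := fun s hs t ht =>
    Commute.commutatorElement_right
      ((hca s hs t ht).symm.commutatorElement_right (hda s hs t ht).symm).symm
      ((hcb s hs t ht).symm.commutatorElement_right (hdb s hs t ht).symm).symm
  rw [← List.prod_map_mul_of_commute hcomm]
  exact congrArg _ (List.map_congr_left fun t ht =>
    commutatorElement_mul_mul_of_commute (hca t ht t ht) (hcb t ht t ht)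
      (hda t ht t ht) (hdb t ht t ht))

theorem list_prod_range_prod_commutators_eq_of_commute {G : Type*} [Group G] (k N : ℕ)
    (g : ℕ → ℕ → G) (hg : ∀ i i', i < k → i' < k → i ≠ i' →
      ∀ j j', j < 2 * N → j' < 2 * N → Commute (g i j) (g i' j')) :
    ((List.range k).map (fun i =>
        ((List.range N).map (fun t => ⁅g i (2 * t), g i (2 * t + 1)⁆)).prod)).prod =
      ((List.range N).map (fun t =>
        ⁅((List.range k).map (fun i => g i (2 * t))).prod,
          ((List.range k).map (fun i => g i (2 * t + 1))).prod⁆)).prod := by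
  induction k with
  | zero => simp
  | succ k ih =>
    have hlast : ∀ j j', j < 2 * N → j' < 2 * N →
        Commute (g k j) ((List.range k).map (fun i => g i j')).prod := fun j j' hj hj' =>
      Commute.list_prod_right _ _ fun x hx => by
        obtain ⟨i, hi, rfl⟩ := List.mem_map.mp hx
        have hik := List.mem_range.mp hi
        exact hg k i (by omega) (by omega) (by omega) j j' hj hj'
    simp only [List.range_succ, List.map_append, List.prod_append, List.map_cons,
      List.map_nil, List.prod_cons, List.prod_nil, mul_one]
    rw [ih fun i i' hi hi' => hg i i' (by omega) (by omega),
      List.prod_map_commutatorElement_mul_mul] <;>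
    · intro s hs t ht
      simp only [List.mem_range] at hs ht
      exact hlast _ _ (by omega) (by omega)

/-- If `H₁, …, H_k` are pairwise elementwise-commuting subgroups of `G` and each
`f_i` is a product of `N` commutators of elements of `H_i`, then the product
`f₁ ⋯ f_k` is the product of the `N` commutators of the column-wise products. -/
theorem product_of_commutators_in_commuting_subgroups
    {G : Type*} [Group G] (k N : ℕ) (H : ℕ → Subgroup G)
    (hcomm : ∀ i j, i < k → j < k → i ≠ j →
      ∀ x ∈ H i, ∀ y ∈ H j, Commute x y)
    (g : ℕ → ℕ → G)
    (hmem : ∀ i j, i < k → j < 2 * N → g i j ∈ H i) :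
    ((List.range k).map (fun i =>
        ((List.range N).map (fun t => ⁅g i (2 * t), g i (2 * t + 1)⁆)).prod)).prod =
      ((List.range N).map (fun t =>
        ⁅((List.range k).map (fun i => g i (2 * t))).prod,
          ((List.range k).map (fun i => g i (2 * t + 1))).prod⁆)).prod :=
  list_prod_range_prod_commutators_eq_of_commute k N g
    fun i i' hi hi' hne j j' hj hj' =>
      hcomm i i' hi hi' hne _ (hmem i j hi hj) _ (hmem i' j' hi' hj')
end
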